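/- The language { (de)ⁿ#fⁿ : n ≥ 1 } over Σ = {d, e, f, #} belongs to F(REG, REG): there exist regular languages L₁ ⊆ Σ* and L₂ ⊆ {u, d}* such that { h(w, v) : w ∈ L₁, v ∈ L₂, |w| = |v| } = { (de)ⁿ#fⁿ : n ≥ 1 }. -/

import Mathlib

/-- The folding direction alphabet Γ = {u, d}. -/
inductive FDir : Type
  | up : FDir
  | down : FDir
  deriving DecidableEq

/-- Auxiliary folding function operating on reversed words. -/
def foldRev {α : Type} : List α → List FDir → Option (List α)
  | [], [] => some []
  | a :: w, b :: v =>
      (foldRev w v).map fun x =>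
        match b with
        | FDir.up => a :: x
        | FDir.down => x ++ [a]
  | _, _ => none

/-- The folding function `h : Σ* × Γ* → Σ*` (partial, modeled with `Option`):
`h(ε, ε) = ε`; for `a ∈ Σ`, `h(w·a, v·u) = a·h(w, v)` and `h(w·a, v·d) = h(w, v)·a`;
`h(w, v)` is undefined (`none`) when `|w| ≠ |v|`. -/
def foldWord {α : Type} (w : List α) (v : List FDir) : Option (List α) :=
  foldRev w.reverse v.reverse

/-- The language of the F-system Φ = (L₁, L₂):
`L(Φ) = { h(w, v) : w ∈ L₁, v ∈ L₂, |w| = |v| }`. -/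
def FLang {α : Type} (L₁ : Language α) (L₂ : Language FDir) : Language α :=
  { s | ∃ w ∈ L₁, ∃ v ∈ L₂, w.length = v.length ∧ foldWord w v = some s }

/-- The alphabet Σ = {d, e, f, #} (`hash` stands for `#`). -/
inductive SymDEFH : Type
  | d : SymDEFH
  | e : SymDEFH
  | f : SymDEFH
  | hash : SymDEFH
  deriving DecidableEq

/-! ### Auxiliary definitions -/

/-- `W n = # (fed)ⁿ`. -/
def Wn (n : ℕ) : List SymDEFH :=
  SymDEFH.hash :: (List.replicate n [SymDEFH.f, SymDEFH.e, SymDEFH.d]).flatten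

/-- `V n = u (duu)ⁿ`. -/
def Vn (n : ℕ) : List FDir :=
  FDir.up :: (List.replicate n [FDir.down, FDir.up, FDir.up]).flatten

/-- `Tgt n = (de)ⁿ # fⁿ`. -/
def Tgt (n : ℕ) : List SymDEFH :=
  (List.replicate n [SymDEFH.d, SymDEFH.e]).flatten ++ [SymDEFH.hash] ++
    List.replicate n SymDEFH.f

lemma Wn_succ (n : ℕ) : Wn (n + 1) = Wn n ++ [SymDEFH.f, SymDEFH.e, SymDEFH.d] := by
  simp [Wn, List.replicate_succ']

lemma Vn_succ (n : ℕ) : Vn (n + 1) = Vn n ++ [FDir.down, FDir.up, FDir.up] := by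
  simp [Vn, List.replicate_succ']

lemma len_Wn (n : ℕ) : (Wn n).length = 3 * n + 1 := by
  induction n with
  | zero => rfl
  | succ m ih => rw [Wn_succ, List.length_append, ih]; simp; omega

lemma len_Vn (n : ℕ) : (Vn n).length = 3 * n + 1 := by
  induction n with
  | zero => rfl
  | succ m ih => rw [Vn_succ, List.length_append, ih]; simp; omega

lemma rev_Wn (n : ℕ) :
    (Wn n).reverse =
      (List.replicate n [SymDEFH.d, SymDEFH.e, SymDEFH.f]).flatten ++ [SymDEFH.hash] := by
  induction n with
  | zero => rfl
  | succ m ih =>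
      rw [Wn_succ, List.reverse_append, ih]
      simp [List.replicate_succ]

lemma rev_Vn (n : ℕ) :
    (Vn n).reverse =
      (List.replicate n [FDir.up, FDir.up, FDir.down]).flatten ++ [FDir.up] := by
  induction n with
  | zero => rfl
  | succ m ih =>
      rw [Vn_succ, List.reverse_append, ih]
      simp [List.replicate_succ]

lemma fold_lemma (n : ℕ) :
    foldRev ((List.replicate n [SymDEFH.d, SymDEFH.e, SymDEFH.f]).flatten ++ [SymDEFH.hash])
        ((List.replicate n [FDir.up, FDir.up, FDir.down]).flatten ++ [FDir.up]) =
      some (Tgt n) := by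
  induction n with
  | zero => rfl
  | succ m ih =>
      simp only [List.replicate_succ, List.flatten_cons, List.cons_append, List.append_assoc]
      simp only [foldRev, ih, Option.map_some]
      rw [List.nil_append, List.nil_append, ih, Option.map_some, Option.map_some,
        Option.map_some]
      have hrep : List.replicate m SymDEFH.f ++ [SymDEFH.f] =
          SymDEFH.f :: List.replicate m SymDEFH.f := by
        rw [← List.replicate_succ', List.replicate_succ]
      simp [Tgt, List.replicate_succ, List.append_assoc, hrep]

/-! ### The DFA for L₁ = { #(fed)ⁿ : n ≥ 1 } -/

inductive St1 : Type
  | q0 | q1 | q2 | q3 | q4 | qD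
  deriving DecidableEq

instance : Fintype St1 := ⟨{.q0, .q1, .q2, .q3, .q4, .qD}, fun x => by cases x <;> decide⟩

def step1 : St1 → SymDEFH → St1
  | .q0, .hash => .q1
  | .q1, .f => .q2
  | .q2, .e => .q3
  | .q3, .d => .q4
  | .q4, .f => .q2
  | _, _ => .qD

def M1 : DFA SymDEFH St1 := ⟨step1, .q0, {.q4}⟩

def Spec1 : St1 → List SymDEFH → Prop
  | .q0, x => x = []
  | .q1, x => x = [SymDEFH.hash]
  | .q2, x => ∃ k, x = Wn k ++ [SymDEFH.f]
  | .q3, x => ∃ k, x = Wn k ++ [SymDEFH.f, SymDEFH.e]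
  | .q4, x => ∃ k, x = Wn (k + 1)
  | .qD, _ => True

lemma inv1 : ∀ x, Spec1 (M1.eval x) x := by
  intro x
  induction x using List.reverseRecOn with
  | nil => exact rfl
  | append_singleton x a ih =>
      rw [DFA.eval_append_singleton]
      cases hs : M1.eval x <;> rw [hs] at ih <;> cases a <;>
        simp only [Spec1, M1, step1] at ih ⊢ <;> try trivial
      · simp [ih]
      · exact ⟨0, by rw [ih]; rfl⟩
      · obtain ⟨k, rfl⟩ := ih; exact ⟨k, by simp⟩
      · obtain ⟨k, rfl⟩ := ih; exact ⟨k, by simp [Wn_succ]⟩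
      · obtain ⟨k, rfl⟩ := ih; exact ⟨k + 1, rfl⟩

lemma evalFrom_q4 (n : ℕ) :
    M1.evalFrom .q4 ((List.replicate n [SymDEFH.f, SymDEFH.e, SymDEFH.d]).flatten) = .q4 := by
  induction n with
  | zero => rfl
  | succ m ih =>
      simp only [List.replicate_succ, List.flatten_cons]
      rw [DFA.evalFrom_of_append]
      exact ih

lemma eval_Wn {n : ℕ} (hn : 1 ≤ n) : M1.eval (Wn n) = .q4 := by
  obtain ⟨m, rfl⟩ := Nat.exists_eq_add_of_le hn
  show M1.evalFrom .q0 (Wn (1 + m)) = .q4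
  rw [add_comm, Wn]
  simp only [List.replicate_succ, List.flatten_cons]
  have : M1.evalFrom .q0
      (SymDEFH.hash :: ([SymDEFH.f, SymDEFH.e, SymDEFH.d] ++
        (List.replicate m [SymDEFH.f, SymDEFH.e, SymDEFH.d]).flatten)) =
      M1.evalFrom .q4 ((List.replicate m [SymDEFH.f, SymDEFH.e, SymDEFH.d]).flatten) := rfl
  rw [this]
  exact evalFrom_q4 m

lemma accepts_M1 : M1.accepts = {x | ∃ n, 1 ≤ n ∧ x = Wn n} := by
  ext x
  rw [DFA.mem_accepts]
  constructor
  · intro h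
    have h4 : M1.eval x = .q4 := h
    have := inv1 x
    rw [h4] at this
    obtain ⟨k, rfl⟩ := this
    exact ⟨k + 1, by omega, rfl⟩
  · rintro ⟨n, hn, rfl⟩
    show M1.eval (Wn n) ∈ M1.accept
    rw [eval_Wn hn]; rfl

/-! ### The DFA for L₂ = { u(duu)ⁿ : n ≥ 1 } -/

inductive St2 : Type
  | t0 | t1 | t2 | t3 | t4 | tD
  deriving DecidableEq

instance : Fintype St2 := ⟨{.t0, .t1, .t2, .t3, .t4, .tD}, fun x => by cases x <;> decide⟩

def step2 : St2 → FDir → St2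
  | .t0, .up => .t1
  | .t1, .down => .t2
  | .t2, .up => .t3
  | .t3, .up => .t4
  | .t4, .down => .t2
  | _, _ => .tD

def M2 : DFA FDir St2 := ⟨step2, .t0, {.t4}⟩

def Spec2 : St2 → List FDir → Prop
  | .t0, x => x = []
  | .t1, x => x = [FDir.up]
  | .t2, x => ∃ k, x = Vn k ++ [FDir.down]
  | .t3, x => ∃ k, x = Vn k ++ [FDir.down, FDir.up]
  | .t4, x => ∃ k, x = Vn (k + 1)
  | .tD, _ => True

lemma inv2 : ∀ x, Spec2 (M2.eval x) x := by
  intro x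
  induction x using List.reverseRecOn with
  | nil => exact rfl
  | append_singleton x a ih =>
      rw [DFA.eval_append_singleton]
      cases hs : M2.eval x <;> rw [hs] at ih <;> cases a <;>
        simp only [Spec2, M2, step2] at ih ⊢ <;> try trivial
      · simp [ih]
      · exact ⟨0, by rw [ih]; rfl⟩
      · obtain ⟨k, rfl⟩ := ih; exact ⟨k, by simp⟩
      · obtain ⟨k, rfl⟩ := ih; exact ⟨k, by simp [Vn_succ]⟩
      · obtain ⟨k, rfl⟩ := ih; exact ⟨k + 1, rfl⟩

lemma evalFrom_t4 (n : ℕ) :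
    M2.evalFrom .t4 ((List.replicate n [FDir.down, FDir.up, FDir.up]).flatten) = .t4 := by
  induction n with
  | zero => rfl
  | succ m ih =>
      simp only [List.replicate_succ, List.flatten_cons]
      rw [DFA.evalFrom_of_append]
      exact ih

lemma eval_Vn {n : ℕ} (hn : 1 ≤ n) : M2.eval (Vn n) = .t4 := by
  obtain ⟨m, rfl⟩ := Nat.exists_eq_add_of_le hn
  show M2.evalFrom .t0 (Vn (1 + m)) = .t4
  rw [add_comm, Vn]
  simp only [List.replicate_succ, List.flatten_cons]
  have : M2.evalFrom .t0
      (FDir.up :: ([FDir.down, FDir.up, FDir.up] ++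
        (List.replicate m [FDir.down, FDir.up, FDir.up]).flatten)) =
      M2.evalFrom .t4 ((List.replicate m [FDir.down, FDir.up, FDir.up]).flatten) := rfl
  rw [this]
  exact evalFrom_t4 m

lemma accepts_M2 : M2.accepts = {x | ∃ n, 1 ≤ n ∧ x = Vn n} := by
  ext x
  rw [DFA.mem_accepts]
  constructor
  · intro h
    have h4 : M2.eval x = .t4 := h
    have := inv2 x
    rw [h4] at this
    obtain ⟨k, rfl⟩ := this
    exact ⟨k + 1, by omega, rfl⟩
  · rintro ⟨n, hn, rfl⟩
    show M2.eval (Vn n) ∈ M2.accept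
    rw [eval_Vn hn]; rfl

/-- The language `{ (de)ⁿ#fⁿ : n ≥ 1 }` belongs to F(REG, REG): there exist regular
languages `L₁ ⊆ Σ*` and `L₂ ⊆ Γ*` such that
`{ h(w, v) : w ∈ L₁, v ∈ L₂, |w| = |v| } = { (de)ⁿ#fⁿ : n ≥ 1 }`. -/
theorem denfn_mem_fsystem :
    ∃ (L₁ : Language SymDEFH) (L₂ : Language FDir),
      L₁.IsRegular ∧ L₂.IsRegular ∧
      FLang L₁ L₂ = { s | ∃ n : ℕ, 1 ≤ n ∧
        s = (List.replicate n [SymDEFH.d, SymDEFH.e]).flatten ++ [SymDEFH.hash] ++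
            List.replicate n SymDEFH.f } := by
  refine ⟨{x | ∃ n, 1 ≤ n ∧ x = Wn n}, {x | ∃ n, 1 ≤ n ∧ x = Vn n},
    ⟨St1, inferInstance, M1, accepts_M1⟩, ⟨St2, inferInstance, M2, accepts_M2⟩, ?_⟩
  ext s
  simp only [FLang, Set.mem_setOf_eq]
  constructor
  · rintro ⟨w, ⟨n, hn, rfl⟩, v, ⟨m, hm, rfl⟩, hlen, hfold⟩
    have hnm : n = m := by rw [len_Wn, len_Vn] at hlen; omega
    subst hnm
    rw [foldWord, rev_Wn, rev_Vn, fold_lemma] at hfold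
    refine ⟨n, hn, ?_⟩
    have := Option.some.inj hfold
    rw [← this]; rfl
  · rintro ⟨n, hn, rfl⟩
    refine ⟨Wn n, ⟨n, hn, rfl⟩, Vn n, ⟨n, hn, rfl⟩, by rw [len_Wn, len_Vn], ?_⟩
    rw [foldWord, rev_Wn, rev_Vn, fold_lemma]
    rfl
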